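/- Let g be the nilpotent Lie algebra n₅,₄ with basis X₁,…,X₅ and nonzero brackets [X₅,X₄]=X₃, [X₅,X₃]=X₂, [X₄,X₃]=X₁. Then g is 3-step nilpotent, dim[g,g] = 3, and for every ξ ∈ g* not vanishing on [g,g] the coadjoint isotropy g(ξ) = {X : ξ([X,g])=0} has dimension 3; hence ind g = 3 and g is of class T. -/

import Mathlib

/-!
In the coordinates `x = (x₃, -x₄, x₅)` of `X` and `y` of `Y`, the form `ξ([X, Y])` is the triple
product `w ⬝ (x × y)` with `w = (ξ X₃, ξ X₂, ξ X₁)`. Hence `g(ξ)` is the kernel of `X ↦ w × x`,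
whose rank is `2` as soon as `w ≠ 0`, i.e. as soon as `ξ` does not vanish on
`[g, g] = span (X₁, X₂, X₃)`; then `dim g(ξ) = 5 - 2 = 3`. A form vanishing on `[g, g]` has
`g(ξ) = g`, so the minimum of `dim g(ξ)` is `3` as well.
-/

open Module

/-- The coadjoint isotropy subalgebra `g(ξ) = {X ∈ g : ξ([X,Y]) = 0 for all Y}`. -/
noncomputable def coadjointIsotropy {L : Type*} [LieRing L] [LieAlgebra ℝ L]
    (ξ : Module.Dual ℝ L) : Submodule ℝ L where
  carrier := {X | ∀ Y : L, ξ ⁅X, Y⁆ = 0}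
  add_mem' := by
    intro a b ha hb Y
    simp [add_lie, ha Y, hb Y]
  zero_mem' := by intro Y; simp
  smul_mem' := by
    intro c a ha Y
    simp [smul_lie, ha Y]

/-- `ind g := min {dim g(ξ) : ξ ∈ g*}`. -/
noncomputable def lieIndex (L : Type*) [LieRing L] [LieAlgebra ℝ L] : ℕ :=
  sInf (Set.range fun ξ : Module.Dual ℝ L => finrank ℝ (coadjointIsotropy ξ))

/-- `g` is of class `T` if `dim g(ξ) = ind g` for every `ξ ∈ g*` not vanishing on `[g,g]`. -/
def IsClassT (L : Type*) [LieRing L] [LieAlgebra ℝ L] : Prop :=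
  ∀ ξ : Module.Dual ℝ L,
    ¬ (∀ x ∈ LieAlgebra.derivedSeries ℝ L 1, ξ x = 0) →
      finrank ℝ (coadjointIsotropy ξ) = lieIndex L

open LieModule LieAlgebra Matrix

theorem LieAlgebra.derivedSeries_one_eq_lowerCentralSeries_one (R L : Type*) [CommRing R]
    [LieRing L] [LieAlgebra R L] : derivedSeries R L 1 = lowerCentralSeries R L L 1 :=
  rfl

theorem LieAlgebra.lie_mem_derivedSeries_one {R L : Type*} [CommRing R] [LieRing L]
    [LieAlgebra R L] (x y : L) : ⁅x, y⁆ ∈ derivedSeries R L 1 :=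
  LieSubmodule.lie_mem_lie (LieSubmodule.mem_top x) (LieSubmodule.mem_top y)

theorem LieModule.lowerCentralSeries_succ_toSubmodule_le {R L M : Type*} [CommRing R]
    [LieRing L] [LieAlgebra R L] [AddCommGroup M] [Module R M] [LieRingModule L M]
    [LieModule R L M] {k : ℕ} {p : Submodule R M}
    (h : ∀ (x : L), ∀ m ∈ lowerCentralSeries R L M k, ⁅x, m⁆ ∈ p) :
    (lowerCentralSeries R L M (k + 1)).toSubmodule ≤ p := by
  rw [lowerCentralSeries_succ, LieSubmodule.lieIdeal_oper_eq_linear_span', Submodule.span_le]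
  rintro _ ⟨x, -, m, hm, rfl⟩
  exact h x m hm

section CrossProduct

theorem forall_dotProduct_cross_eq_zero_iff {R : Type*} [CommRing R] (w u : Fin 3 → R) :
    (∀ v, w ⬝ᵥ u ⨯₃ v = 0) ↔ w ⨯₃ u = 0 := by
  simp_rw [triple_product_permutation w, triple_product_permutation u, dotProduct_comm _ (w ⨯₃ u)]
  exact dotProduct_eq_zero_iff

theorem ker_crossProduct {K : Type*} [Field K] {w : Fin 3 → K} (hw : w ≠ 0) :
    LinearMap.ker (crossProduct w) = K ∙ w := by
  ext u
  rw [LinearMap.mem_ker, Submodule.mem_span_singleton, ← not_iff_not,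
    ← ne_eq, crossProduct_ne_zero_iff_linearIndependent, LinearIndependent.pair_iff' hw, not_exists]

theorem finrank_range_crossProduct {K : Type*} [Field K] {w : Fin 3 → K} (hw : w ≠ 0) :
    finrank K (LinearMap.range (crossProduct w)) = 2 := by
  have h := LinearMap.finrank_range_add_finrank_ker (crossProduct w)
  rw [ker_crossProduct hw, finrank_span_singleton hw, finrank_fin_fun] at h
  omega

end CrossProduct

section Coadjoint

variable {L : Type*} [LieRing L] [LieAlgebra ℝ L]

theorem mem_coadjointIsotropy {ξ : Dual ℝ L} {X : L} :
    X ∈ coadjointIsotropy ξ ↔ ∀ Y : L, ξ ⁅X, Y⁆ = 0 := Iff.rfl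

theorem coadjointIsotropy_eq_top {ξ : Dual ℝ L}
    (hξ : ∀ x ∈ derivedSeries ℝ L 1, ξ x = 0) : coadjointIsotropy ξ = ⊤ :=
  eq_top_iff.mpr fun X _ Y => hξ _ (lie_mem_derivedSeries_one X Y)

theorem lieIndex_eq_of_forall_le {n : ℕ} (ξ₀ : Dual ℝ L)
    (h₀ : finrank ℝ (coadjointIsotropy ξ₀) = n)
    (h : ∀ ξ : Dual ℝ L, n ≤ finrank ℝ (coadjointIsotropy ξ)) : lieIndex L = n :=
  le_antisymm (Nat.sInf_le ⟨ξ₀, h₀⟩) (le_csInf ⟨_, ξ₀, rfl⟩ (Set.forall_mem_range.mpr h))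

end Coadjoint

/-- `b i` plays the role of `X_{i+1}`. -/
structure IsN54Basis {L : Type*} [LieRing L] [LieAlgebra ℝ L] (b : Basis (Fin 5) ℝ L) : Prop where
  lie_43 : ⁅b 4, b 3⁆ = b 2
  lie_42 : ⁅b 4, b 2⁆ = b 1
  lie_32 : ⁅b 3, b 2⁆ = b 0
  lie_eq_zero : ∀ i j : Fin 5, j < i → (i, j) ≠ (4, 3) → (i, j) ≠ (4, 2) → (i, j) ≠ (3, 2) →
    ⁅b i, b j⁆ = 0

/-- `X ↦ (x₃, -x₄, x₅)`; the sign turns `ξ ⁅X, Y⁆` into a triple product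
(`IsN54Basis.apply_lie_eq_dotProduct_cross`). -/
noncomputable def n54Coords {L : Type*} [AddCommGroup L] [Module ℝ L] (b : Basis (Fin 5) ℝ L) :
    L →ₗ[ℝ] Fin 3 → ℝ :=
  LinearMap.pi ![b.coord 2, -b.coord 3, b.coord 4]

theorem n54Coords_surjective {L : Type*} [AddCommGroup L] [Module ℝ L] (b : Basis (Fin 5) ℝ L) :
    Function.Surjective (n54Coords b) := fun v =>
  ⟨v 0 • b 2 - v 1 • b 3 + v 2 • b 4, by
    ext i; fin_cases i <;> simp [n54Coords]⟩

namespace IsN54Basis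

variable {L : Type*} [LieRing L] [LieAlgebra ℝ L] {b : Basis (Fin 5) ℝ L}

theorem lie_eq (hb : IsN54Basis b) (X Y : L) :
    ⁅X, Y⁆ = (b.repr X 3 * b.repr Y 2 - b.repr X 2 * b.repr Y 3) • b 0
      + (b.repr X 4 * b.repr Y 2 - b.repr X 2 * b.repr Y 4) • b 1
      + (b.repr X 4 * b.repr Y 3 - b.repr X 3 * b.repr Y 4) • b 2 := by
  have lie_eq_zero' (i j : Fin 5) (hji : j < i) (h43 : (i, j) ≠ (4, 3)) (h42 : (i, j) ≠ (4, 2))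
      (h32 : (i, j) ≠ (3, 2)) : ⁅b j, b i⁆ = 0 := by
    rw [← lie_skew, hb.lie_eq_zero i j hji h43 h42 h32, neg_zero]
  conv_lhs => rw [← b.sum_repr X, ← b.sum_repr Y]
  simp (disch := decide) only [Fin.sum_univ_five, add_lie, lie_add, smul_lie, lie_smul, lie_self,
    hb.lie_eq_zero, lie_eq_zero', ← lie_skew (b 3) (b 4), ← lie_skew (b 2) (b 4),
    ← lie_skew (b 2) (b 3), hb.lie_43, hb.lie_42, hb.lie_32, smul_zero, smul_neg]
  module

theorem lie_mem_span (hb : IsN54Basis b) (X Y : L) :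
    ⁅X, Y⁆ ∈ Submodule.span ℝ {b 0, b 1, b 2} := by
  rw [hb.lie_eq]
  refine add_mem (add_mem ?_ ?_) ?_ <;> exact Submodule.smul_mem _ _ (Submodule.subset_span (by simp))

theorem lie_basis_zero (hb : IsN54Basis b) (X : L) : ⁅X, b 0⁆ = 0 := by
  simp [hb.lie_eq]

theorem lie_basis_one (hb : IsN54Basis b) (X : L) : ⁅X, b 1⁆ = 0 := by
  simp [hb.lie_eq]

theorem lie_basis_two (hb : IsN54Basis b) (X : L) :
    ⁅X, b 2⁆ = b.repr X 3 • b 0 + b.repr X 4 • b 1 := by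
  simp [hb.lie_eq]

theorem lie_mem_span_of_mem (hb : IsN54Basis b) (X : L) {Y : L}
    (hY : Y ∈ Submodule.span ℝ {b 0, b 1, b 2}) : ⁅X, Y⁆ ∈ Submodule.span ℝ {b 0, b 1} := by
  suffices Submodule.span ℝ {b 0, b 1, b 2} ≤
      (Submodule.span ℝ {b 0, b 1}).comap (toEnd ℝ L L X) from this hY
  rw [Submodule.span_le]
  rintro _ (rfl | rfl | rfl) <;>
    simp [hb.lie_basis_zero, hb.lie_basis_one, hb.lie_basis_two, Submodule.mem_span_pair]

theorem lie_eq_zero_of_mem (hb : IsN54Basis b) (X : L) {Y : L}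
    (hY : Y ∈ Submodule.span ℝ {b 0, b 1}) : ⁅X, Y⁆ = 0 := by
  suffices Submodule.span ℝ {b 0, b 1} ≤ LinearMap.ker (toEnd ℝ L L X) from this hY
  rw [Submodule.span_le]
  rintro _ (rfl | rfl) <;> simp [hb.lie_basis_zero, hb.lie_basis_one]

theorem derivedSeries_one_eq (hb : IsN54Basis b) :
    (derivedSeries ℝ L 1).toSubmodule = Submodule.span ℝ {b 0, b 1, b 2} := by
  refine le_antisymm ?_ ?_
  · rw [derivedSeries_one_eq_lowerCentralSeries_one]
    exact lowerCentralSeries_succ_toSubmodule_le fun X Y _ => hb.lie_mem_span X Y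
  rw [Submodule.span_le]
  rintro _ (rfl | rfl | rfl)
  · exact hb.lie_32 ▸ lie_mem_derivedSeries_one _ _
  · exact hb.lie_42 ▸ lie_mem_derivedSeries_one _ _
  · exact hb.lie_43 ▸ lie_mem_derivedSeries_one _ _

theorem finrank_derivedSeries_one (hb : IsN54Basis b) :
    finrank ℝ (derivedSeries ℝ L 1).toSubmodule = 3 := by
  rw [hb.derivedSeries_one_eq, show ({b 0, b 1, b 2} : Set L) = Set.range (b ∘ ![0, 1, 2]) by
      ext; simp [Fin.exists_fin_succ]; tauto,
    finrank_span_eq_card (b.linearIndependent.comp _ (by decide)), Fintype.card_fin]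

theorem lowerCentralSeries_two_le (hb : IsN54Basis b) :
    (lowerCentralSeries ℝ L L 2).toSubmodule ≤ Submodule.span ℝ {b 0, b 1} :=
  lowerCentralSeries_succ_toSubmodule_le fun X _ hY =>
    hb.lie_mem_span_of_mem X (hb.derivedSeries_one_eq ▸ hY)

theorem lowerCentralSeries_three_eq_bot (hb : IsN54Basis b) : lowerCentralSeries ℝ L L 3 = ⊥ :=
  (LieSubmodule.lie_eq_bot_iff _ _).mpr fun X _ _ hY =>
    hb.lie_eq_zero_of_mem X (hb.lowerCentralSeries_two_le hY)

theorem lowerCentralSeries_two_ne_bot (hb : IsN54Basis b) : lowerCentralSeries ℝ L L 2 ≠ ⊥ := by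
  have h : b 0 ∈ lowerCentralSeries ℝ L L 2 := by
    rw [← hb.lie_32, ← hb.lie_43]
    exact LieSubmodule.lie_mem_lie (LieSubmodule.mem_top _)
      (LieSubmodule.lie_mem_lie (LieSubmodule.mem_top _) (LieSubmodule.mem_top _))
  intro hbot
  rw [hbot, LieSubmodule.mem_bot] at h
  exact b.ne_zero 0 h

theorem forall_derivedSeries_apply_eq_zero_iff (hb : IsN54Basis b) (ξ : Dual ℝ L) :
    (∀ x ∈ derivedSeries ℝ L 1, ξ x = 0) ↔ ![ξ (b 2), ξ (b 1), ξ (b 0)] = 0 := by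
  change (derivedSeries ℝ L 1).toSubmodule ≤ LinearMap.ker ξ ↔ _
  rw [hb.derivedSeries_one_eq, Submodule.span_le]
  simp only [Set.insert_subset_iff, Set.singleton_subset_iff, SetLike.mem_coe, LinearMap.mem_ker,
    cons_eq_zero_iff, zero_empty, and_true]
  tauto

theorem apply_lie_eq_dotProduct_cross (hb : IsN54Basis b) (ξ : Dual ℝ L) (X Y : L) :
    ξ ⁅X, Y⁆ = ![ξ (b 2), ξ (b 1), ξ (b 0)] ⬝ᵥ n54Coords b X ⨯₃ n54Coords b Y := by
  rw [hb.lie_eq]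
  simp only [map_add, map_smul, smul_eq_mul, n54Coords, LinearMap.pi_apply, LinearMap.neg_apply,
    Basis.coord_apply, cross_apply, dotProduct, Fin.sum_univ_three, cons_val_zero, cons_val_one,
    cons_val]
  ring

theorem coadjointIsotropy_eq_ker (hb : IsN54Basis b) (ξ : Dual ℝ L) :
    coadjointIsotropy ξ =
      LinearMap.ker (crossProduct ![ξ (b 2), ξ (b 1), ξ (b 0)] ∘ₗ n54Coords b) := by
  ext X
  rw [mem_coadjointIsotropy, LinearMap.mem_ker, LinearMap.comp_apply,
    ← forall_dotProduct_cross_eq_zero_iff, (n54Coords_surjective b).forall]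
  simp only [hb.apply_lie_eq_dotProduct_cross]

theorem finrank_coadjointIsotropy (hb : IsN54Basis b) {ξ : Dual ℝ L}
    (hξ : ¬ ∀ x ∈ derivedSeries ℝ L 1, ξ x = 0) : finrank ℝ (coadjointIsotropy ξ) = 3 := by
  rw [hb.forall_derivedSeries_apply_eq_zero_iff] at hξ
  have := Module.Finite.of_basis b
  have h := LinearMap.finrank_range_add_finrank_ker
    (crossProduct ![ξ (b 2), ξ (b 1), ξ (b 0)] ∘ₗ n54Coords b)
  rw [LinearMap.range_comp_of_range_eq_top _ (LinearMap.range_eq_top.mpr (n54Coords_surjective b)),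
    finrank_range_crossProduct hξ, finrank_eq_card_basis b, Fintype.card_fin,
    ← hb.coadjointIsotropy_eq_ker] at h
  omega

end IsN54Basis

theorem stmt_17_general {L : Type*} [LieRing L] [LieAlgebra ℝ L]
    (b : Basis (Fin 5) ℝ L)
    (h1 : ⁅b 4, b 3⁆ = b 2) (h2 : ⁅b 4, b 2⁆ = b 1) (h3 : ⁅b 3, b 2⁆ = b 0)
    (h0 : ∀ i j : Fin 5, j < i → (i, j) ≠ (4, 3) → (i, j) ≠ (4, 2) → (i, j) ≠ (3, 2) →
      ⁅b i, b j⁆ = 0) :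
    LieModule.lowerCentralSeries ℝ L L 3 = ⊥ ∧
    LieModule.lowerCentralSeries ℝ L L 2 ≠ ⊥ ∧
    finrank ℝ (LieAlgebra.derivedSeries ℝ L 1).toSubmodule = 3 ∧
    (∀ ξ : Module.Dual ℝ L,
      ¬ (∀ x ∈ LieAlgebra.derivedSeries ℝ L 1, ξ x = 0) →
        finrank ℝ (coadjointIsotropy ξ) = 3) ∧
    lieIndex L = 3 ∧ IsClassT L := by
  have hb : IsN54Basis b := ⟨h1, h2, h3, h0⟩
  have hdim : ∀ ξ : Dual ℝ L, ¬ (∀ x ∈ derivedSeries ℝ L 1, ξ x = 0) →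
      finrank ℝ (coadjointIsotropy ξ) = 3 := fun _ => hb.finrank_coadjointIsotropy
  have hindex : lieIndex L = 3 := by
    refine lieIndex_eq_of_forall_le (b.coord 2) (hdim _ ?_) fun ξ => ?_
    · rw [hb.forall_derivedSeries_apply_eq_zero_iff]
      simp
    · by_cases hξ : ∀ x ∈ derivedSeries ℝ L 1, ξ x = 0
      · rw [coadjointIsotropy_eq_top hξ, finrank_top, finrank_eq_card_basis b, Fintype.card_fin]
        omega
      · exact (hdim ξ hξ).ge
  exact ⟨hb.lowerCentralSeries_three_eq_bot, hb.lowerCentralSeries_two_ne_bot,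
    hb.finrank_derivedSeries_one, hdim, hindex, fun ξ hξ => hindex ▸ hdim ξ hξ⟩

/-- The Lie algebra `n₅,₄` (basis `X₁,…,X₅`, nonzero brackets `[X₅,X₄]=X₃`, `[X₅,X₃]=X₂`,
`[X₄,X₃]=X₁`; here `b i` corresponds to `X_{i+1}`) is 3-step nilpotent, has `dim [g,g] = 3`,
every `ξ` not vanishing on `[g,g]` has `dim g(ξ) = 3`, `ind g = 3`, and `g` is of class `T`. -/
theorem stmt_17 {L : Type*} [LieRing L] [LieAlgebra ℝ L] [FiniteDimensional ℝ L]
    (b : Basis (Fin 5) ℝ L)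
    (h1 : ⁅b 4, b 3⁆ = b 2) (h2 : ⁅b 4, b 2⁆ = b 1) (h3 : ⁅b 3, b 2⁆ = b 0)
    (h0 : ∀ i j : Fin 5, j < i → (i, j) ≠ (4, 3) → (i, j) ≠ (4, 2) → (i, j) ≠ (3, 2) →
      ⁅b i, b j⁆ = 0) :
    LieModule.lowerCentralSeries ℝ L L 3 = ⊥ ∧
    LieModule.lowerCentralSeries ℝ L L 2 ≠ ⊥ ∧
    finrank ℝ (LieAlgebra.derivedSeries ℝ L 1).toSubmodule = 3 ∧
    (∀ ξ : Module.Dual ℝ L,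
      ¬ (∀ x ∈ LieAlgebra.derivedSeries ℝ L 1, ξ x = 0) →
        finrank ℝ (coadjointIsotropy ξ) = 3) ∧
    lieIndex L = 3 ∧ IsClassT L :=
  stmt_17_general b h1 h2 h3 h0
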